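/- Let $f\in\ell^2(\mathbb{N}^p)$ and $g\in\ell^2(\mathbb{N}^q)$ be symmetric and vanishing on diagonals. Let $\Delta_{p+q}\subset\mathbb{N}^{p+q}$ be the set of tuples with pairwise distinct entries and define the maximal influence $\mathcal{M}(f):=\sup_k \sum_{i_1,\dots,i_{p-1}} f(i_1,\dots,i_{p-1},k)^2$. Then $\|\widetilde{f\otimes g}\,\mathbf{1}_{\Delta_{p+q}^c}\|^2_{\ell^2(\mathbb{N}^{p+q})} \le \sum_{r=1}^{p\wedge q} r!\binom{p}{r}\binom{q}{r}\min\{\|f\|^2\,\mathcal{M}(g),\ \|g\|^2\,\mathcal{M}(f)\}$. -/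

import Mathlib

open MeasureTheory ProbabilityTheory

namespace RademacherPT

/-- Glue a `(p-r)`-tuple and an `r`-tuple into a `p`-tuple. -/
noncomputable def glue {p r : ℕ} (i : Fin (p - r) → ℕ) (k : Fin r → ℕ) : Fin p → ℕ :=
  fun m => if h : (m : ℕ) < p - r then i ⟨m, h⟩
    else k ⟨(m : ℕ) - (p - r), by have := m.isLt; omega⟩

/-- The `r`-th contraction of two kernels. -/
noncomputable def contraction {p q : ℕ} (r : ℕ) (f : (Fin p → ℕ) → ℝ) (g : (Fin q → ℕ) → ℝ) :
    (Fin (p - r) → ℕ) × (Fin (q - r) → ℕ) → ℝ :=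
  fun x => ∑' k : Fin r → ℕ, f (glue x.1 k) * g (glue x.2 k)

/-- Canonical symmetrization of a kernel. -/
noncomputable def symmetrization {p : ℕ} (h : (Fin p → ℕ) → ℝ) : (Fin p → ℕ) → ℝ :=
  fun i => (p.factorial : ℝ)⁻¹ * ∑ σ : Equiv.Perm (Fin p), h (i ∘ σ)

/-- Tensor product of two kernels. -/
noncomputable def tensorProd {p q : ℕ} (f : (Fin p → ℕ) → ℝ) (g : (Fin q → ℕ) → ℝ) :
    (Fin (p + q) → ℕ) → ℝ :=
  fun i => f (fun a => i (Fin.castAdd q a)) * g (fun b => i (Fin.natAdd p b))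

/-- Maximal influence of a kernel. -/
noncomputable def maxInfluence {p : ℕ} (f : (Fin p → ℕ) → ℝ) : ℝ :=
  ⨆ k : ℕ, ∑' i : Fin (p - 1) → ℕ, (f (glue (r := 1) i (fun _ => k)))^2

/-- A kernel is symmetric. -/
def IsSymm {p : ℕ} (f : (Fin p → ℕ) → ℝ) : Prop :=
  ∀ (σ : Equiv.Perm (Fin p)) (i : Fin p → ℕ), f (i ∘ σ) = f i

/-- A kernel vanishes on diagonals. -/
def VanishOnDiag {p : ℕ} (f : (Fin p → ℕ) → ℝ) : Prop :=
  ∀ i : Fin p → ℕ, ¬ Function.Injective i → f i = 0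

end RademacherPT

/-!
Averaging over permutations is an `ℓ²`-contraction on any permutation-invariant set, in particular
on the non-injective tuples, so it suffices to bound the mass of `f ⊗ g` there. As `f` and `g`
vanish on diagonals, a non-injective tuple `(a, b)` carrying mass has a collision `a m = b n`.
For fixed `m`, `n` and `a`, the mass of `g` on `{b | b n = a m}` is, after moving the coordinate
`n` to the last slot by symmetry, an influence of `g`, hence at most `𝓜(g)`. Summing over the
`p q` pairs `(m, n)` gives `p q ‖f‖² 𝓜(g)`, the `r = 1` term of the right-hand side, and exchanging
the roles of `f` and `g` gives the other bound.

All `ℓ²` masses are computed in `ℝ≥0∞`, where series can be rearranged without summability side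
conditions; only the final bound is transferred back to `ℝ`.
-/

open Function Finset
open scoped ENNReal Nat

theorem tsum_comp_perm {ι α M : Type*} [AddCommMonoid M] [TopologicalSpace M]
    (σ : Equiv.Perm ι) (u : (ι → α) → M) : ∑' i, u (i ∘ σ) = ∑' i, u i :=
  (σ.symm.arrowCongr (Equiv.refl α)).tsum_eq u

theorem tsum_le_of_tsum_ofReal_le {ι : Type*} {u : ι → ℝ} (hu : ∀ i, 0 ≤ u i) {c : ℝ}
    (hc : 0 ≤ c) (h : ∑' i, ENNReal.ofReal (u i) ≤ ENNReal.ofReal c) : ∑' i, u i ≤ c := by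
  calc ∑' i, u i = ∑' i, (ENNReal.ofReal (u i)).toReal := by
        simp only [ENNReal.toReal_ofReal (hu _)]
    _ = (∑' i, ENNReal.ofReal (u i)).toReal :=
        (ENNReal.tsum_toReal_eq fun _ => ENNReal.ofReal_ne_top).symm
    _ ≤ c := ENNReal.toReal_le_of_le_ofReal hc h

namespace RademacherPT

section Symmetrization

variable {N : ℕ}

theorem sq_symmetrization_le (h : (Fin N → ℕ) → ℝ) (i : Fin N → ℕ) :
    symmetrization h i ^ 2 ≤ (N ! : ℝ)⁻¹ * ∑ σ : Equiv.Perm (Fin N), h (i ∘ σ) ^ 2 := by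
  have hcs : (∑ σ : Equiv.Perm (Fin N), h (i ∘ σ)) ^ 2
      ≤ N ! * ∑ σ : Equiv.Perm (Fin N), h (i ∘ σ) ^ 2 := by
    simpa only [card_univ, Fintype.card_perm, Fintype.card_fin] using
      sq_sum_le_card_mul_sum_sq (s := univ) (f := fun σ : Equiv.Perm (Fin N) => h (i ∘ σ))
  calc symmetrization h i ^ 2 = (N ! : ℝ)⁻¹ ^ 2 * (∑ σ : Equiv.Perm (Fin N), h (i ∘ σ)) ^ 2 := by
        rw [symmetrization, mul_pow]
    _ ≤ (N ! : ℝ)⁻¹ ^ 2 * (N ! * ∑ σ : Equiv.Perm (Fin N), h (i ∘ σ) ^ 2) := by gcongr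
    _ = (N ! : ℝ)⁻¹ * ∑ σ : Equiv.Perm (Fin N), h (i ∘ σ) ^ 2 := by field_simp

theorem ofReal_sq_indicator_symmetrization_le {S : Set (Fin N → ℕ)}
    (hS : ∀ (σ : Equiv.Perm (Fin N)) i, i ∘ σ ∈ S ↔ i ∈ S) (h : (Fin N → ℕ) → ℝ)
    (i : Fin N → ℕ) :
    ENNReal.ofReal (S.indicator (symmetrization h) i ^ 2)
      ≤ (N ! : ℝ≥0∞)⁻¹ * ∑ σ : Equiv.Perm (Fin N), ENNReal.ofReal (S.indicator h (i ∘ σ) ^ 2) := by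
  by_cases hi : i ∈ S
  · simp only [Set.indicator_of_mem hi, Set.indicator_of_mem ((hS _ i).2 hi)]
    calc ENNReal.ofReal (symmetrization h i ^ 2)
        ≤ ENNReal.ofReal ((N ! : ℝ)⁻¹ * ∑ σ : Equiv.Perm (Fin N), h (i ∘ σ) ^ 2) :=
          ENNReal.ofReal_le_ofReal (sq_symmetrization_le h i)
      _ = _ := by
          rw [ENNReal.ofReal_mul (by positivity), ENNReal.ofReal_inv_of_pos (by positivity),
            ENNReal.ofReal_natCast, ENNReal.ofReal_sum_of_nonneg fun σ _ => sq_nonneg _]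
  · simp [Set.indicator_of_notMem hi]

theorem tsum_ofReal_sq_indicator_symmetrization_le {S : Set (Fin N → ℕ)}
    (hS : ∀ (σ : Equiv.Perm (Fin N)) i, i ∘ σ ∈ S ↔ i ∈ S) (h : (Fin N → ℕ) → ℝ) :
    ∑' i, ENNReal.ofReal (S.indicator (symmetrization h) i ^ 2)
      ≤ ∑' i, ENNReal.ofReal (S.indicator h i ^ 2) := by
  set T := ∑' i, ENNReal.ofReal (S.indicator h i ^ 2)
  calc ∑' i, ENNReal.ofReal (S.indicator (symmetrization h) i ^ 2)
      ≤ ∑' i, (N ! : ℝ≥0∞)⁻¹ *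
          ∑ σ : Equiv.Perm (Fin N), ENNReal.ofReal (S.indicator h (i ∘ σ) ^ 2) :=
        ENNReal.tsum_le_tsum fun i => ofReal_sq_indicator_symmetrization_le hS h i
    _ = (N ! : ℝ≥0∞)⁻¹ * ∑ σ : Equiv.Perm (Fin N), T := by
        rw [ENNReal.tsum_mul_left, Summable.tsum_finsetSum fun _ _ => ENNReal.summable]
        exact congrArg _ <| sum_congr rfl fun σ _ =>
          tsum_comp_perm σ fun i => ENNReal.ofReal (S.indicator h i ^ 2)
    _ = T := by
        rw [sum_const, card_univ, Fintype.card_perm, Fintype.card_fin, nsmul_eq_mul, ← mul_assoc,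
          ENNReal.inv_mul_cancel (by positivity) (ENNReal.natCast_ne_top _), one_mul]

end Symmetrization

section Influence

variable {q : ℕ}

theorem glue_one_injective (k : ℕ) :
    Injective fun j : Fin (q - 1) → ℕ => glue (p := q) (r := 1) j fun _ => k := by
  intro j j' h
  funext t
  simpa [glue, t.isLt] using congrFun h ⟨t, by omega⟩

theorem maxInfluence_nonneg (g : (Fin q → ℕ) → ℝ) : 0 ≤ maxInfluence g :=
  Real.iSup_nonneg fun _ => tsum_nonneg fun _ => sq_nonneg _

theorem tsum_sq_glue_one_le_maxInfluence {g : (Fin q → ℕ) → ℝ}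
    (hgs : Summable fun j => g j ^ 2) (k : ℕ) :
    ∑' j : Fin (q - 1) → ℕ, g (glue (r := 1) j fun _ => k) ^ 2 ≤ maxInfluence g := by
  refine le_ciSup (f := fun k => ∑' j : Fin (q - 1) → ℕ, g (glue (r := 1) j fun _ => k) ^ 2)
    ⟨∑' b, g b ^ 2, ?_⟩ k
  rintro _ ⟨k', rfl⟩
  exact tsum_comp_le_tsum_of_inj hgs (fun _ => sq_nonneg _) (glue_one_injective k')

theorem tsum_ite_apply_eq_of_isSymm {g : (Fin q → ℕ) → ℝ} (hg : IsSymm g) (n n' : Fin q)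
    (k : ℕ) :
    ∑' b : Fin q → ℕ, (if b n = k then ENNReal.ofReal (g b ^ 2) else 0)
      = ∑' b : Fin q → ℕ, (if b n' = k then ENNReal.ofReal (g b ^ 2) else 0) := by
  conv_rhs => rw [← tsum_comp_perm (Equiv.swap n n')]
  exact tsum_congr fun b => by simp [hg (Equiv.swap n n') b]

theorem tsum_ite_apply_last_eq (g : (Fin q → ℕ) → ℝ) (hq : 0 < q) (k : ℕ) :
    ∑' b : Fin q → ℕ, (if b ⟨q - 1, by omega⟩ = k then ENNReal.ofReal (g b ^ 2) else 0)
      = ∑' j : Fin (q - 1) → ℕ, ENNReal.ofReal (g (glue (r := 1) j fun _ => k) ^ 2) := by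
  rw [← (glue_one_injective k).tsum_eq]
  · exact tsum_congr fun j => if_pos (by simp [glue])
  · intro b hb
    have hbk : b ⟨q - 1, by omega⟩ = k := by
      by_contra h
      exact hb (if_neg h)
    refine ⟨fun t => b ⟨t, by omega⟩, funext fun m => ?_⟩
    by_cases hm : (m : ℕ) < q - 1
    · simp [glue, hm]
    · simp only [glue, dif_neg hm, ← hbk]
      congr
      omega

theorem tsum_ite_apply_eq_le_maxInfluence {g : (Fin q → ℕ) → ℝ} (hg : IsSymm g)
    (hgs : Summable fun j => g j ^ 2) (n : Fin q) (k : ℕ) :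
    ∑' b : Fin q → ℕ, (if b n = k then ENNReal.ofReal (g b ^ 2) else 0)
      ≤ ENNReal.ofReal (maxInfluence g) := by
  have hq : 0 < q := n.pos
  rw [tsum_ite_apply_eq_of_isSymm hg n ⟨q - 1, by omega⟩, tsum_ite_apply_last_eq g hq k,
    ← ENNReal.ofReal_tsum_of_nonneg (fun _ => sq_nonneg _)
      (hgs.comp_injective (glue_one_injective k))]
  exact ENNReal.ofReal_le_ofReal (tsum_sq_glue_one_le_maxInfluence hgs k)

end Influence

section Collision

variable {p q : ℕ}

noncomputable def collisionMass (f : (Fin p → ℕ) → ℝ) (g : (Fin q → ℕ) → ℝ) : ℝ≥0∞ :=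
  ∑ m : Fin p, ∑ n : Fin q, ∑' (a : Fin p → ℕ) (b : Fin q → ℕ),
    if a m = b n then ENNReal.ofReal (f a ^ 2) * ENNReal.ofReal (g b ^ 2) else 0

theorem collisionMass_comm (f : (Fin p → ℕ) → ℝ) (g : (Fin q → ℕ) → ℝ) :
    collisionMass f g = collisionMass g f := by
  rw [collisionMass, collisionMass, sum_comm]
  refine sum_congr rfl fun n _ => sum_congr rfl fun m _ => ?_
  rw [ENNReal.tsum_comm]
  exact tsum_congr fun b => tsum_congr fun a => if_congr eq_comm (mul_comm _ _) rfl

theorem tsum_tsum_ite_apply_eq_le (f : (Fin p → ℕ) → ℝ) {g : (Fin q → ℕ) → ℝ} (hg : IsSymm g)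
    (hgs : Summable fun j => g j ^ 2) (m : Fin p) (n : Fin q) :
    ∑' (a : Fin p → ℕ) (b : Fin q → ℕ),
        (if a m = b n then ENNReal.ofReal (f a ^ 2) * ENNReal.ofReal (g b ^ 2) else 0)
      ≤ (∑' a, ENNReal.ofReal (f a ^ 2)) * ENNReal.ofReal (maxInfluence g) := by
  rw [← ENNReal.tsum_mul_right]
  refine ENNReal.tsum_le_tsum fun a => ?_
  calc ∑' b : Fin q → ℕ,
        (if a m = b n then ENNReal.ofReal (f a ^ 2) * ENNReal.ofReal (g b ^ 2) else 0)
      = ENNReal.ofReal (f a ^ 2) *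
          ∑' b : Fin q → ℕ, (if b n = a m then ENNReal.ofReal (g b ^ 2) else 0) := by
        rw [← ENNReal.tsum_mul_left]
        exact tsum_congr fun b => by rw [mul_ite, mul_zero]; exact if_congr eq_comm rfl rfl
    _ ≤ ENNReal.ofReal (f a ^ 2) * ENNReal.ofReal (maxInfluence g) := by
        gcongr
        exact tsum_ite_apply_eq_le_maxInfluence hg hgs n (a m)

theorem collisionMass_le {f : (Fin p → ℕ) → ℝ} {g : (Fin q → ℕ) → ℝ} (hg : IsSymm g)
    (hfs : Summable fun i => f i ^ 2) (hgs : Summable fun j => g j ^ 2) :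
    collisionMass f g ≤ ENNReal.ofReal (p * q * ((∑' i, f i ^ 2) * maxInfluence g)) := by
  calc collisionMass f g
      ≤ ∑ _m : Fin p, ∑ _n : Fin q,
          (∑' a, ENNReal.ofReal (f a ^ 2)) * ENNReal.ofReal (maxInfluence g) :=
        sum_le_sum fun m _ => sum_le_sum fun n _ => tsum_tsum_ite_apply_eq_le f hg hgs m n
    _ = ENNReal.ofReal (p * q * ((∑' i, f i ^ 2) * maxInfluence g)) := by
        rw [← ENNReal.ofReal_tsum_of_nonneg (fun _ => sq_nonneg _) hfs,
          ENNReal.ofReal_mul (by positivity), ENNReal.ofReal_mul (by positivity),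
          ENNReal.ofReal_mul (tsum_nonneg fun _ => sq_nonneg _)]
        simp [mul_assoc]

theorem tensorProd_append (f : (Fin p → ℕ) → ℝ) (g : (Fin q → ℕ) → ℝ) (a : Fin p → ℕ)
    (b : Fin q → ℕ) : tensorProd f g (Fin.append a b) = f a * g b := by
  simp [tensorProd]

theorem ofReal_sq_indicator_tensorProd_append_le {f : (Fin p → ℕ) → ℝ} {g : (Fin q → ℕ) → ℝ}
    (hfd : VanishOnDiag f) (hgd : VanishOnDiag g) (a : Fin p → ℕ) (b : Fin q → ℕ) :
    ENNReal.ofReal ({i | ¬Injective i}.indicator (tensorProd f g) (Fin.append a b) ^ 2)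
      ≤ ∑ m : Fin p, ∑ n : Fin q,
          if a m = b n then ENNReal.ofReal (f a ^ 2) * ENNReal.ofReal (g b ^ 2) else 0 := by
  by_cases hzero : {i | ¬Injective i}.indicator (tensorProd f g) (Fin.append a b) = 0
  · simp [hzero]
  obtain ⟨hni, hne⟩ : ¬Injective (Fin.append a b) ∧ f a * g b ≠ 0 := by
    simpa [Set.indicator_apply, tensorProd_append] using hzero
  have ha : Injective a := not_not.1 (mt (hfd a) (left_ne_zero_of_mul hne))
  have hb : Injective b := not_not.1 (mt (hgd b) (right_ne_zero_of_mul hne))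
  obtain ⟨m, n, hmn⟩ : ∃ m n, a m = b n := by
    simpa [Fin.append_injective_iff, ha, hb] using hni
  set X := ENNReal.ofReal (f a ^ 2) * ENNReal.ofReal (g b ^ 2)
  calc ENNReal.ofReal ({i | ¬Injective i}.indicator (tensorProd f g) (Fin.append a b) ^ 2)
      = if a m = b n then X else 0 := by
        rw [if_pos hmn, Set.indicator_of_mem hni, tensorProd_append, mul_pow,
          ENNReal.ofReal_mul (sq_nonneg _)]
    _ ≤ ∑ n', if a m = b n' then X else 0 :=
        single_le_sum (f := fun n' => if a m = b n' then X else 0) (fun _ _ => zero_le)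
          (mem_univ n)
    _ ≤ ∑ m', ∑ n', if a m' = b n' then X else 0 :=
        single_le_sum (f := fun m' => ∑ n', if a m' = b n' then X else 0) (fun _ _ => zero_le)
          (mem_univ m)

theorem tsum_ofReal_sq_indicator_tensorProd_le {f : (Fin p → ℕ) → ℝ} {g : (Fin q → ℕ) → ℝ}
    (hfd : VanishOnDiag f) (hgd : VanishOnDiag g) :
    ∑' i, ENNReal.ofReal ({i | ¬Injective i}.indicator (tensorProd f g) i ^ 2)
      ≤ collisionMass f g := by
  rw [← (Fin.appendEquiv p q).tsum_eq, ENNReal.tsum_prod', collisionMass]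
  calc _ ≤ ∑' (a : Fin p → ℕ) (b : Fin q → ℕ), ∑ m : Fin p, ∑ n : Fin q,
          if a m = b n then ENNReal.ofReal (f a ^ 2) * ENNReal.ofReal (g b ^ 2) else 0 :=
        ENNReal.tsum_le_tsum fun a => ENNReal.tsum_le_tsum fun b =>
          ofReal_sq_indicator_tensorProd_append_le hfd hgd a b
    _ = _ := by simp_rw [Summable.tsum_finsetSum fun _ _ => ENNReal.summable]

end Collision

theorem mul_le_sum_factorial_mul_choose_mul_choose (p q : ℕ) {c : ℝ} (hc : 0 ≤ c) :
    p * q * c ≤ ∑ r ∈ Icc 1 (min p q), (r ! : ℝ) * p.choose r * q.choose r * c := by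
  by_cases h : p = 0 ∨ q = 0
  · rcases h with rfl | rfl <;> simp
  have h1 : 1 ∈ Icc 1 (min p q) := mem_Icc.2 ⟨le_rfl, by omega⟩
  simpa using single_le_sum (f := fun r => (r ! : ℝ) * p.choose r * q.choose r * c)
    (fun r _ => by positivity) h1

/-- Influence bound for the off-diagonal part of the symmetrized tensor product. -/
theorem offdiag_symmetrized_tensor_le {p q : ℕ}
    (f : (Fin p → ℕ) → ℝ) (g : (Fin q → ℕ) → ℝ)
    (hf : IsSymm f) (hg : IsSymm g) (hfd : VanishOnDiag f) (hgd : VanishOnDiag g)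
    (hfs : Summable fun i => (f i) ^ 2) (hgs : Summable fun j => (g j) ^ 2) :
    (∑' i : Fin (p + q) → ℕ,
        (if ¬ Function.Injective i then symmetrization (tensorProd f g) i else 0) ^ 2)
      ≤ ∑ r ∈ Finset.Icc 1 (min p q), (r.factorial : ℝ) * (p.choose r : ℝ) * (q.choose r : ℝ) *
          min ((∑' i : Fin p → ℕ, (f i) ^ 2) * maxInfluence g)
              ((∑' j : Fin q → ℕ, (g j) ^ 2) * maxInfluence f) := by
  set A := (∑' i : Fin p → ℕ, (f i) ^ 2) * maxInfluence g
  set B := (∑' j : Fin q → ℕ, (g j) ^ 2) * maxInfluence f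
  have hA : 0 ≤ A := mul_nonneg (tsum_nonneg fun _ => sq_nonneg _) (maxInfluence_nonneg g)
  have hB : 0 ≤ B := mul_nonneg (tsum_nonneg fun _ => sq_nonneg _) (maxInfluence_nonneg f)
  refine tsum_le_of_tsum_ofReal_le (fun _ => sq_nonneg _)
    (sum_nonneg fun r _ => mul_nonneg (by positivity) (le_min hA hB)) ?_
  calc _ = ∑' i, ENNReal.ofReal ({i | ¬Injective i}.indicator
          (symmetrization (tensorProd f g)) i ^ 2) := by
        simp only [Set.indicator_apply, Set.mem_ofPred_eq]
    _ ≤ ∑' i, ENNReal.ofReal ({i | ¬Injective i}.indicator (tensorProd f g) i ^ 2) :=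
        tsum_ofReal_sq_indicator_symmetrization_le (fun σ i => not_congr (σ.injective_comp i)) _
    _ ≤ collisionMass f g := tsum_ofReal_sq_indicator_tensorProd_le hfd hgd
    _ ≤ ENNReal.ofReal (p * q * min A B) := by
        rw [mul_min_of_nonneg _ _ (by positivity), ENNReal.ofReal_min]
        refine le_min (collisionMass_le hg hfs hgs) ?_
        rw [collisionMass_comm, mul_comm (p : ℝ)]
        exact collisionMass_le hf hgs hfs
    _ ≤ _ :=
        ENNReal.ofReal_le_ofReal (mul_le_sum_factorial_mul_choose_mul_choose p q (le_min hA hB))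

end RademacherPT
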